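/- For ω ∈ F_n let N(ω) be the number of a ∈ {1, …, n−1} such that b̃_{a-1} = 0 and b̃_a = 0. Then for every ε > 0, the conditional probability μ( (4/18 − ε)·n < N < (4/18 + ε)·n ∣ F_n ) tends to 1 as n → ∞. -/

import Mathlib

open MeasureTheory ProbabilityTheory Filter

/-- `μ` is the infinite product over `ℕ` of the uniform probability measure on
`{-1,0,1} ⊆ ℤ`, characterized by its values on cylinder sets.  (Taking `n = 0`
shows `μ` is a probability measure.) -/
def IsCDGProductMeasure (μ : Measure (ℕ → ℤ)) : Prop :=
  ∀ (n : ℕ) (c : ℕ → ℤ),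
    μ {ω : ℕ → ℤ | ∀ i < n, ω i = c i} =
      ∏ i ∈ Finset.range n,
        (if c i = -1 ∨ c i = 0 ∨ c i = 1 then (1 / 3 : ENNReal) else 0)

/-- `S n b = ∑_{i=0}^{n-1} 2^(n-1-i) b i`. -/
def cdgS (n : ℕ) (b : ℕ → ℤ) : ℤ := ∑ i ∈ Finset.range n, 2 ^ (n - 1 - i) * b i

/-- The standard form `b̃ a` of the sequence `b` for length `n`: the binary digit of
`S = ∑_{i<n} 2^(n-1-i) b i` in position `n-1-a`, so that (in the "first 1" case, where
`1 ≤ S ≤ 2^n − 1`) one has `S = ∑_{a<n} 2^(n-1-a) b̃ a` with each `b̃ a ∈ {0,1}`. -/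
def btilde (n : ℕ) (b : ℕ → ℤ) (a : ℕ) : ℕ := (cdgS n b).toNat / 2 ^ (n - 1 - a) % 2

/-- The "first 1" event `F_n` for length `n`: there is `j < n` with `b j = 1` and
`b k = 0` for all `k < j`. -/
def firstOne (n : ℕ) : Set (ℕ → ℤ) :=
  {b : ℕ → ℤ | ∃ j < n, b j = 1 ∧ ∀ k < j, b k = 0}

/-!
In the "first 1" case `S > 0`, so the binary digits of `S` are produced from the signed digits,
least significant first, by subtraction with borrow: a Markov chain on (borrow, last bit) driven by
i.i.d. uniform digits. For a bounded potential `h` solving the Poisson equation of this chain,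
`9 N - 2 n + h(state)` is a martingale with increments bounded by `8`, `2/9 = 4/18` being the
stationary frequency of pairs of zeros. Orthogonality of the increments bounds its second moment,
summed over all `3^n` digit strings, by `O(n 3^n)`. Since `F_n` consists of `(3^n - 1)/2` strings,
Chebyshev's inequality bounds the conditional probability of `|N - 2n/9| ≥ εn` by `O(1/(ε² n))`.
-/

open Finset
open scoped ENNReal

namespace SignedBinary

section General

variable {α : Type*} (D : Finset α)

theorem sum_piFinset_succ {M : Type*} [AddCommMonoid M] {t : ℕ} (f : (Fin (t + 1) → α) → M) :
    ∑ c ∈ Fintype.piFinset (fun _ : Fin (t + 1) => D), f c =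
      ∑ d ∈ D, ∑ c ∈ Fintype.piFinset (fun _ : Fin t => D), f (Fin.cons d c) := by
  have h := filter_piFinset_eq_map_consEquiv (fun _ : Fin (t + 1) => D) (fun _ => True)
  simp only [filter_true] at h
  rw [h, sum_map, sum_product]
  rfl

theorem sum_sq_le_of_martingale {R : Type*} [CommRing R] [LinearOrder R] [IsStrictOrderedRing R]
    (G : (t : ℕ) → (Fin t → α) → R) (K : R) (h_zero : ∀ c, G 0 c = 0)
    (h_mean : ∀ t (c : Fin t → α), ∑ d ∈ D, (G (t + 1) (Fin.cons d c) - G t c) = 0)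
    (h_bdd : ∀ t (c : Fin t → α), ∀ d ∈ D, (G (t + 1) (Fin.cons d c) - G t c) ^ 2 ≤ K) :
    ∀ t, ∑ c ∈ Fintype.piFinset (fun _ : Fin t => D), G t c ^ 2 ≤ K * t * (#D : R) ^ t
  | 0 => by simp [h_zero]
  | t + 1 => by
    have h_step : ∀ c : Fin t → α,
        ∑ d ∈ D, G (t + 1) (Fin.cons d c) ^ 2 ≤ #D * G t c ^ 2 + #D * K := by
      intro c
      calc ∑ d ∈ D, G (t + 1) (Fin.cons d c) ^ 2
          = ∑ d ∈ D, (G t c ^ 2 + 2 * G t c * (G (t + 1) (Fin.cons d c) - G t c)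
              + (G (t + 1) (Fin.cons d c) - G t c) ^ 2) := by
            refine sum_congr rfl fun d _ => ?_
            ring
        _ = #D * G t c ^ 2 + ∑ d ∈ D, (G (t + 1) (Fin.cons d c) - G t c) ^ 2 := by
            rw [sum_add_distrib, sum_add_distrib, ← mul_sum, h_mean, sum_const, nsmul_eq_mul]
            ring
        _ ≤ #D * G t c ^ 2 + #D * K := by
            grw [sum_le_card_nsmul D _ K (h_bdd t c), nsmul_eq_mul]
    calc ∑ c ∈ Fintype.piFinset (fun _ : Fin (t + 1) => D), G (t + 1) c ^ 2
        = ∑ c ∈ Fintype.piFinset (fun _ : Fin t => D), ∑ d ∈ D, G (t + 1) (Fin.cons d c) ^ 2 := by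
          rw [sum_piFinset_succ, sum_comm]
      _ ≤ ∑ c ∈ Fintype.piFinset (fun _ : Fin t => D), (#D * G t c ^ 2 + #D * K) :=
          sum_le_sum fun c _ => h_step c
      _ = #D * ∑ c ∈ Fintype.piFinset (fun _ : Fin t => D), G t c ^ 2 + K * (#D : R) ^ (t + 1) := by
          rw [sum_add_distrib, ← mul_sum, sum_const, Fintype.card_piFinset_const, nsmul_eq_mul]
          push_cast
          ring
      _ ≤ #D * (K * t * (#D : R) ^ t) + K * (#D : R) ^ (t + 1) := by
          grw [sum_sq_le_of_martingale G K h_zero h_mean h_bdd t]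
      _ = K * ↑(t + 1) * (#D : R) ^ (t + 1) := by
          push_cast
          ring

theorem card_filter_le_sum_sq_div {β : Type*} (s : Finset β) (f : β → ℝ) {δ : ℝ} (hδ : 0 < δ) :
    (#{x ∈ s | δ ≤ |f x|} : ℝ) ≤ (∑ x ∈ s, f x ^ 2) / δ ^ 2 := by
  rw [le_div_iff₀ (by positivity)]
  calc (#{x ∈ s | δ ≤ |f x|} : ℝ) * δ ^ 2 = ∑ x ∈ s with δ ≤ |f x|, δ ^ 2 := by
        rw [sum_const, nsmul_eq_mul]
    _ ≤ ∑ x ∈ s with δ ≤ |f x|, f x ^ 2 := by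
        refine sum_le_sum fun x hx => ?_
        rw [← sq_abs (f x)]
        exact pow_le_pow_left₀ hδ.le (mem_filter.1 hx).2 2
    _ ≤ ∑ x ∈ s, f x ^ 2 :=
        sum_le_sum_of_subset_of_nonneg (filter_subset _ _) fun _ _ _ => sq_nonneg _

theorem tendsto_card_filter_div_card {β : ℕ → Type*} (s : ∀ n, Finset (β n))
    (p : ∀ n, β n → Prop) [∀ n, DecidablePred (p n)] {u : ℕ → ℝ} (hu : Tendsto u atTop (nhds 0))
    (h : ∀ᶠ n in atTop, (s n).Nonempty ∧ (#{x ∈ s n | ¬p n x} : ℝ) ≤ u n * #(s n)) :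
    Tendsto (fun n => (#{x ∈ s n | p n x} : ℝ≥0∞) / #(s n)) atTop (nhds 1) := by
  have h_real : Tendsto (fun n => (#{x ∈ s n | p n x} : ℝ) / #(s n)) atTop (nhds 1) := by
    refine tendsto_of_tendsto_of_tendsto_of_le_of_le' (by simpa using tendsto_const_nhds.sub hu)
      tendsto_const_nhds ?_ (Eventually.of_forall fun n => ?_)
    · filter_upwards [h] with n ⟨h_ne, h_le⟩
      have h_split : (#{x ∈ s n | p n x} : ℝ) + #{x ∈ s n | ¬p n x} = #(s n) := by
        exact_mod_cast card_filter_add_card_filter_not (s := s n) (p n)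
      rw [le_div_iff₀ (by exact_mod_cast h_ne.card_pos)]
      linarith
    · exact div_le_one_of_le₀ (by exact_mod_cast card_filter_le _ _) (Nat.cast_nonneg _)
  have h_ennreal := ENNReal.tendsto_ofReal h_real
  rw [ENNReal.ofReal_one] at h_ennreal
  refine h_ennreal.congr' ?_
  filter_upwards [h] with n ⟨h_ne, _⟩
  rw [ENNReal.ofReal_div_of_pos (by exact_mod_cast h_ne.card_pos), ENNReal.ofReal_natCast,
    ENNReal.ofReal_natCast]

end General

def digits : Finset ℤ := {-1, 0, 1}

def cube (t : ℕ) : Finset (Fin t → ℤ) := Fintype.piFinset fun _ => digits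

theorem card_cube (t : ℕ) : #(cube t) = 3 ^ t := by
  simp [cube, digits]

theorem mem_cube_cons {t : ℕ} {d : ℤ} {c : Fin t → ℤ} :
    Fin.cons d c ∈ cube (t + 1) ↔ d ∈ digits ∧ c ∈ cube t := by
  simp only [cube, Fintype.mem_piFinset, Fin.forall_fin_succ, Fin.cons_zero, Fin.cons_succ]

/-- `(borrow, last output bit)` -/
abbrev State := Bool × Bool

/-- The last bit starts as `true` so that no pair of zeros is counted below the lowest bit. -/
def initState : State := (false, true)

def step (s : State) (u : ℤ) : State := (u - s.1.toNat < 0, (u - s.1.toNat) % 2 = 1)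

/-- The digits are read from `c (t - 1)`, the least significant one, to `c 0`. -/
def state : {t : ℕ} → (Fin t → ℤ) → State
  | 0, _ => initState
  | _ + 1, c => step (state (Fin.tail c)) (c 0)

def binaryValue : {t : ℕ} → (Fin t → ℤ) → ℕ
  | 0, _ => 0
  | t + 1, c => 2 ^ t * (state c).2.toNat + binaryValue (Fin.tail c)

def zeroPairCount : {t : ℕ} → (Fin t → ℤ) → ℕ
  | 0, _ => 0
  | _ + 1, c => zeroPairCount (Fin.tail c) + (!(state (Fin.tail c)).2 && !(state c).2).toNat

def signedValue {t : ℕ} (c : Fin t → ℤ) : ℤ := ∑ i : Fin t, 2 ^ (t - 1 - (i : ℕ)) * c i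

section Cons

variable {t : ℕ} (d : ℤ) (c : Fin t → ℤ)

@[simp] theorem state_cons : state (Fin.cons d c) = step (state c) d := rfl

@[simp] theorem binaryValue_cons :
    binaryValue (Fin.cons d c) = 2 ^ t * (step (state c) d).2.toNat + binaryValue c := rfl

@[simp] theorem zeroPairCount_cons : zeroPairCount (Fin.cons d c) =
    zeroPairCount c + (!(state c).2 && !(step (state c) d).2).toNat := rfl

theorem signedValue_cons : signedValue (Fin.cons d c) = 2 ^ t * d + signedValue c := by
  simp only [signedValue, Fin.sum_univ_succ, Fin.cons_zero, Fin.cons_succ, Fin.val_zero,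
    Fin.val_succ]
  congr 2 with i
  congr 2
  omega

end Cons

theorem binaryValue_lt_two_pow : ∀ {t : ℕ} (c : Fin t → ℤ), binaryValue c < 2 ^ t
  | 0, _ => by simp [binaryValue]
  | t + 1, c => by
    have := binaryValue_lt_two_pow (Fin.tail c)
    have : (state c).2.toNat ≤ 1 := Bool.toNat_le _
    rw [binaryValue, pow_succ]
    nlinarith

theorem testBit_binaryValue_cons_of_lt {t k : ℕ} (d : ℤ) (c : Fin t → ℤ) (hk : k < t) :
    (binaryValue (Fin.cons d c)).testBit k = (binaryValue c).testBit k := by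
  rw [binaryValue_cons, Nat.testBit_two_pow_mul_add _ (binaryValue_lt_two_pow c), if_pos hk]

theorem testBit_binaryValue_cons_self {t : ℕ} (d : ℤ) (c : Fin t → ℤ) :
    (binaryValue (Fin.cons d c)).testBit t = (step (state c) d).2 := by
  rw [binaryValue_cons, Nat.testBit_two_pow_mul_add _ (binaryValue_lt_two_pow c),
    if_neg (lt_irrefl t), Nat.sub_self]
  cases (step (state c) d).2 <;> rfl

theorem state_snd_eq_testBit {t : ℕ} (c : Fin (t + 1) → ℤ) :
    (state c).2 = (binaryValue c).testBit t := by
  induction c using Fin.consCases with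
  | cons d c => rw [testBit_binaryValue_cons_self, state_cons]

theorem digit_sub_borrow_eq : ∀ s : State, ∀ u ∈ digits,
    u - s.1.toNat = (step s u).2.toNat - 2 * (step s u).1.toNat := by
  decide

theorem signedValue_eq_binaryValue_sub : ∀ {t : ℕ} (c : Fin t → ℤ), c ∈ cube t →
    signedValue c = binaryValue c - 2 ^ t * (state c).1.toNat
  | 0, _, _ => by simp [signedValue, binaryValue, state, initState]
  | t + 1, c, hc => by
    induction c using Fin.consCases with
    | cons d c =>
      obtain ⟨hd, hc⟩ := mem_cube_cons.1 hc
      have := digit_sub_borrow_eq (state c) d hd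
      rw [signedValue_cons, signedValue_eq_binaryValue_sub c hc, binaryValue_cons, state_cons]
      push_cast
      linear_combination (2 : ℤ) ^ t * this

theorem zeroPairCount_eq_card : ∀ {t : ℕ} (c : Fin (t + 1) → ℤ), zeroPairCount c =
    #{k ∈ range t | (binaryValue c).testBit k = false ∧ (binaryValue c).testBit (k + 1) = false}
  | 0, c => by
    induction c using Fin.consCases with
    | cons d c => simp [zeroPairCount, state, initState]
  | t + 1, c => by
    induction c using Fin.consCases with
    | cons d c =>
      have h_low : ∀ k ∈ range t, (binaryValue (Fin.cons d c)).testBit k = false ∧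
          (binaryValue (Fin.cons d c)).testBit (k + 1) = false ↔
          (binaryValue c).testBit k = false ∧ (binaryValue c).testBit (k + 1) = false := by
        intro k hk
        rw [mem_range] at hk
        rw [testBit_binaryValue_cons_of_lt d c (by omega),
          testBit_binaryValue_cons_of_lt d c (by omega)]
      rw [zeroPairCount_cons, zeroPairCount_eq_card c, range_add_one, filter_insert,
        filter_congr h_low, testBit_binaryValue_cons_of_lt d c (Nat.lt_succ_self t),
        testBit_binaryValue_cons_self, state_snd_eq_testBit]
      split_ifs with h
      · rw [card_insert_of_notMem (by simp), h.1, h.2]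
        rfl
      · cases hb : (binaryValue c).testBit t <;> cases hs : (step (state c) d).2 <;> simp_all

/-- `numZeroPairs n (cdgS n ω).toNat` is the paper's `N(ω)`, since
`btilde n ω a = S / 2 ^ (n - 1 - a) % 2`. -/
def numZeroPairs (n S : ℕ) : ℕ :=
  #{a ∈ Ico 1 n | S / 2 ^ (n - 1 - (a - 1)) % 2 = 0 ∧ S / 2 ^ (n - 1 - a) % 2 = 0}

theorem numZeroPairs_eq_card_range (n S : ℕ) : numZeroPairs n S =
    #{k ∈ range (n - 1) | S.testBit k = false ∧ S.testBit (k + 1) = false} := by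
  have h_bit : ∀ i, S / 2 ^ i % 2 = 0 ↔ S.testBit i = false := by
    intro i
    rw [Nat.testBit_eq_decide_div_mod_eq, decide_eq_false_iff_not]
    omega
  refine card_nbij' (fun a => n - 1 - a) (fun k => n - 1 - k) ?_ ?_ ?_ ?_
  · intro a ha
    simp only [mem_coe, mem_filter, mem_Ico, mem_range, ← h_bit] at ha ⊢
    refine ⟨by omega, ha.2.2, ?_⟩
    rw [show n - 1 - a + 1 = n - 1 - (a - 1) by omega]
    exact ha.2.1
  · intro k hk
    simp only [mem_coe, mem_filter, mem_Ico, mem_range, ← h_bit] at hk ⊢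
    refine ⟨by omega, ?_, ?_⟩
    · rw [show n - 1 - (n - 1 - k - 1) = k + 1 by omega]
      exact hk.2.2
    · rw [show n - 1 - (n - 1 - k) = k by omega]
      exact hk.2.1
  · intro a ha
    simp only [mem_coe, mem_filter, mem_Ico] at ha
    dsimp only
    omega
  · intro k hk
    simp only [mem_coe, mem_filter, mem_range] at hk
    dsimp only
    omega

theorem numZeroPairs_binaryValue {t : ℕ} (c : Fin (t + 1) → ℤ) :
    numZeroPairs (t + 1) (binaryValue c) = zeroPairCount c := by
  rw [numZeroPairs_eq_card_range, zeroPairCount_eq_card, Nat.add_sub_cancel]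

def FirstNonzeroIsOne {t : ℕ} (c : Fin t → ℤ) : Prop := ∃ j, c j = 1 ∧ ∀ k < j, c k = 0

instance {t : ℕ} : DecidablePred (@FirstNonzeroIsOne t) := fun c => by
  unfold FirstNonzeroIsOne
  infer_instance

theorem not_firstNonzeroIsOne_zero (c : Fin 0 → ℤ) : ¬FirstNonzeroIsOne c :=
  fun ⟨j, _⟩ => j.elim0

theorem firstNonzeroIsOne_cons {t : ℕ} (d : ℤ) (c : Fin t → ℤ) :
    FirstNonzeroIsOne (Fin.cons d c) ↔ d = 1 ∨ d = 0 ∧ FirstNonzeroIsOne c := by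
  simp [FirstNonzeroIsOne, Fin.exists_fin_succ, Fin.forall_fin_succ, exists_and_left,
    and_left_comm]

theorem borrow_eq_false_of_firstNonzeroIsOne :
    ∀ {t : ℕ} (c : Fin t → ℤ), FirstNonzeroIsOne c → (state c).1 = false
  | 0, c, hc => absurd hc (not_firstNonzeroIsOne_zero c)
  | t + 1, c, hc => by
    induction c using Fin.consCases with
    | cons d c =>
      rcases (firstNonzeroIsOne_cons d c).1 hc with rfl | ⟨rfl, hc'⟩
      · simp [step, Bool.toNat_le]
      · simp [step, borrow_eq_false_of_firstNonzeroIsOne c hc']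

def firstOneCube (t : ℕ) : Finset (Fin t → ℤ) := {c ∈ cube t | FirstNonzeroIsOne c}

theorem two_mul_card_firstOneCube_add_one : ∀ t, 2 * #(firstOneCube t) + 1 = 3 ^ t
  | 0 => by simp [firstOneCube, not_firstNonzeroIsOne_zero]
  | t + 1 => by
    have h : #(firstOneCube (t + 1)) = #(firstOneCube t) + 3 ^ t := by
      simp only [firstOneCube, cube, card_filter]
      rw [sum_piFinset_succ]
      simp [digits, firstNonzeroIsOne_cons]
    have := two_mul_card_firstOneCube_add_one t
    rw [h, pow_succ]
    omega

theorem one_le_card_firstOneCube {n : ℕ} (hn : 1 ≤ n) : 1 ≤ #(firstOneCube n) := by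
  have := Nat.le_self_pow (by omega : n ≠ 0) 3
  have := two_mul_card_firstOneCube_add_one n
  omega

theorem numZeroPairs_signedValue {n : ℕ} {c : Fin n → ℤ} (hc : c ∈ firstOneCube n) :
    numZeroPairs n (signedValue c).toNat = zeroPairCount c := by
  rw [firstOneCube, mem_filter] at hc
  obtain ⟨t, rfl⟩ : ∃ t, n = t + 1 :=
    Nat.exists_eq_succ_of_ne_zero fun h => by subst h; exact not_firstNonzeroIsOne_zero c hc.2
  rw [signedValue_eq_binaryValue_sub c hc.1, borrow_eq_false_of_firstNonzeroIsOne c hc.2]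
  simpa using numZeroPairs_binaryValue c

/-- The solution of the Poisson equation `sum_increment` of the chain `step` with uniform digits. -/
def potential : State → ℤ
  | (false, false) => 3
  | (false, true) => 0
  | (true, false) => 9
  | (true, true) => 3

def increment (s : State) (u : ℤ) : ℤ :=
  9 * (!s.2 && !(step s u).2).toNat - 2 + potential (step s u) - potential s

theorem sum_increment : ∀ s, ∑ u ∈ digits, increment s u = 0 := by
  decide

theorem increment_sq_le : ∀ s, ∀ u ∈ digits, increment s u ^ 2 ≤ 64 := by
  decide

theorem potential_sq_le : ∀ s, potential s ^ 2 ≤ 81 := by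
  decide

def zeroPairMartingale {t : ℕ} (c : Fin t → ℤ) : ℤ :=
  9 * zeroPairCount c - 2 * t + potential (state c)

theorem zeroPairMartingale_cons {t : ℕ} (d : ℤ) (c : Fin t → ℤ) :
    zeroPairMartingale (Fin.cons d c) = zeroPairMartingale c + increment (state c) d := by
  simp only [zeroPairMartingale, increment, zeroPairCount_cons, state_cons]
  push_cast
  ring

theorem sum_sq_zeroPairMartingale_le (t : ℕ) :
    ∑ c ∈ cube t, zeroPairMartingale c ^ 2 ≤ 64 * t * 3 ^ t :=
  sum_sq_le_of_martingale digits (fun _ c => zeroPairMartingale c) 64 (fun _ => rfl)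
    (fun _ c => by simp only [zeroPairMartingale_cons, add_sub_cancel_left, sum_increment])
    (fun _ c u hu => by simpa only [zeroPairMartingale_cons, add_sub_cancel_left]
      using increment_sq_le _ u hu) t

theorem sum_sq_zeroPairCount_sub_le {t : ℕ} (ht : 1 ≤ t) :
    ∑ c ∈ cube t, (9 * zeroPairCount c - 2 * t : ℤ) ^ 2 ≤ 290 * t * 3 ^ t := by
  have h_pt : ∀ c ∈ cube t, (9 * zeroPairCount c - 2 * t : ℤ) ^ 2 ≤
      2 * zeroPairMartingale c ^ 2 + 162 := fun c _ => by
    unfold zeroPairMartingale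
    nlinarith [potential_sq_le (state c),
      sq_nonneg (9 * zeroPairCount c - 2 * t + 2 * potential (state c) : ℤ)]
  calc ∑ c ∈ cube t, (9 * zeroPairCount c - 2 * t : ℤ) ^ 2
      ≤ ∑ c ∈ cube t, (2 * zeroPairMartingale c ^ 2 + 162) := sum_le_sum h_pt
    _ = 2 * ∑ c ∈ cube t, zeroPairMartingale c ^ 2 + 162 * 3 ^ t := by
        rw [sum_add_distrib, ← mul_sum, sum_const, card_cube]
        ring
    _ ≤ 290 * t * 3 ^ t := by
        have : (1 : ℤ) ≤ t := by exact_mod_cast ht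
        nlinarith [sum_sq_zeroPairMartingale_le t, pow_pos (by norm_num : (0 : ℤ) < 3) t]

def IsTypical (ε : ℝ) (n N : ℕ) : Prop := (4 / 18 - ε) * n < N ∧ (N : ℝ) < (4 / 18 + ε) * n

noncomputable instance (ε : ℝ) (n N : ℕ) : Decidable (IsTypical ε n N) := by
  unfold IsTypical
  infer_instance

theorem card_not_isTypical_le {ε : ℝ} (hε : 0 < ε) {n : ℕ} (hn : 1 ≤ n) :
    (#{c ∈ firstOneCube n | ¬IsTypical ε n (numZeroPairs n (signedValue c).toNat)} : ℝ) ≤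
      290 / (27 * ε ^ 2) / n * #(firstOneCube n) := by
  have hn' : (0 : ℝ) < n := by exact_mod_cast hn
  have h_sub : {c ∈ firstOneCube n | ¬IsTypical ε n (numZeroPairs n (signedValue c).toNat)} ⊆
      {c ∈ cube n | 9 * ε * n ≤ |(9 * zeroPairCount c - 2 * n : ℤ)|} := by
    intro c hc
    rw [mem_filter] at hc
    have hc_cube := (mem_filter.1 hc.1).1
    rw [numZeroPairs_signedValue hc.1, IsTypical, not_and_or, not_lt, not_lt] at hc
    refine mem_filter.2 ⟨hc_cube, ?_⟩
    have hεn : 0 < ε * n := by positivity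
    push_cast
    rcases hc.2 with h | h
    · rw [abs_of_nonpos (by linarith)]; linarith
    · rw [abs_of_nonneg (by linarith)]; linarith
  have h_sum : (∑ c ∈ cube n, ((9 * zeroPairCount c - 2 * n : ℤ) : ℝ) ^ 2) ≤ 290 * n * 3 ^ n := by
    exact_mod_cast sum_sq_zeroPairCount_sub_le hn
  have h_three : (3 : ℝ) ^ n ≤ 3 * #(firstOneCube n) := by
    have := two_mul_card_firstOneCube_add_one n
    have h1 : (1 : ℝ) ≤ #(firstOneCube n) := by exact_mod_cast one_le_card_firstOneCube hn
    rw [← Nat.cast_ofNat, ← Nat.cast_pow, ← this]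
    push_cast
    linarith
  calc (#{c ∈ firstOneCube n | ¬IsTypical ε n (numZeroPairs n (signedValue c).toNat)} : ℝ)
      ≤ #{c ∈ cube n | 9 * ε * n ≤ |((9 * zeroPairCount c - 2 * n : ℤ) : ℝ)|} := by
        exact_mod_cast card_le_card h_sub
    _ ≤ (∑ c ∈ cube n, ((9 * zeroPairCount c - 2 * n : ℤ) : ℝ) ^ 2) / (9 * ε * n) ^ 2 :=
        card_filter_le_sum_sq_div _ _ (by positivity)
    _ ≤ 290 * n * (3 * #(firstOneCube n)) / (9 * ε * n) ^ 2 := by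
        gcongr
        exact h_sum.trans (by gcongr)
    _ = 290 / (27 * ε ^ 2) / n * #(firstOneCube n) := by
        field_simp
        ring

def prefixOf (n : ℕ) (ω : ℕ → ℤ) : Fin n → ℤ := fun i => ω i

theorem measurable_prefixOf (n : ℕ) : Measurable (prefixOf n) :=
  measurable_pi_lambda _ fun i => measurable_pi_apply (i : ℕ)

theorem cdgS_eq_signedValue (n : ℕ) (ω : ℕ → ℤ) : cdgS n ω = signedValue (prefixOf n ω) := by
  rw [cdgS, signedValue, ← Fin.sum_univ_eq_sum_range (fun i => 2 ^ (n - 1 - i) * ω i)]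
  rfl

theorem firstOne_eq_setOf_prefixOf (n : ℕ) :
    firstOne n = {ω | FirstNonzeroIsOne (prefixOf n ω)} := by
  ext ω
  constructor
  · rintro ⟨j, hj, h1, h0⟩
    exact ⟨⟨j, hj⟩, h1, fun k hk => h0 k hk⟩
  · rintro ⟨j, h1, h0⟩
    exact ⟨j, j.2, h1, fun k hk => h0 ⟨k, hk.trans j.2⟩ hk⟩

section Measure

variable {μ : Measure (ℕ → ℤ)} {n : ℕ}

theorem measure_prefixOf_preimage_singleton (hμ : IsCDGProductMeasure μ) (c : Fin n → ℤ) :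
    μ (prefixOf n ⁻¹' {c}) = if c ∈ cube n then (1 / 3) ^ n else 0 := by
  set b : ℕ → ℤ := fun i => if h : i < n then c ⟨i, h⟩ else 0
  have h_set : prefixOf n ⁻¹' {c} = {ω | ∀ i < n, ω i = b i} := by
    ext ω
    simp +contextual [prefixOf, b, funext_iff, Fin.forall_iff]
  rw [h_set, hμ n b]
  split_ifs with hc
  · rw [prod_congr rfl fun i hi => if_pos ?_, prod_const, Finset.card_range]
    have hi : i < n := mem_range.1 hi
    simpa [b, hi, digits] using (Fintype.mem_piFinset.1 hc) ⟨i, hi⟩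
  · obtain ⟨i, hi⟩ : ∃ i, c i ∉ digits := by simpa [cube] using hc
    refine prod_eq_zero (mem_range.2 i.2) (if_neg ?_)
    simpa [b, digits] using hi

theorem measure_setOf_prefixOf (hμ : IsCDGProductMeasure μ) (P : (Fin n → ℤ) → Prop)
    [DecidablePred P] : μ {ω | P (prefixOf n ω)} = #{c ∈ cube n | P c} * (1 / 3) ^ n := by
  let f : (Fin n → ℤ) → ℝ≥0∞ := fun c => if c ∈ cube n then (1 / 3) ^ n else 0
  have h_supp : ∀ c ∉ ({c ∈ cube n | P c} : Finset _), Set.indicator {c | P c} f c = 0 := by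
    intro c hc
    rw [mem_filter, not_and'] at hc
    by_cases hPc : P c <;> simp [f, hPc, hc]
  rw [← Set.preimage_ofPred_eq, ← tsum_measure_preimage_singleton (Set.to_countable _)
    fun c _ => measurable_prefixOf n (measurableSet_singleton c)]
  simp_rw [measure_prefixOf_preimage_singleton hμ]
  rw [_root_.tsum_subtype {c | P c} f, tsum_eq_sum h_supp, ← nsmul_eq_mul, ← sum_const]
  refine sum_congr rfl fun c hc => ?_
  rw [mem_filter] at hc
  simp [f, hc.1, hc.2]

theorem cond_firstOne_setOf_prefixOf (hμ : IsCDGProductMeasure μ) (P : (Fin n → ℤ) → Prop)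
    [DecidablePred P] :
    μ[|firstOne n] {ω | P (prefixOf n ω)} = #{c ∈ firstOneCube n | P c} / #(firstOneCube n) := by
  have h_meas : MeasurableSet (firstOne n) := by
    rw [firstOne_eq_setOf_prefixOf]
    exact measurable_prefixOf n
      (Set.to_countable {c : Fin n → ℤ | FirstNonzeroIsOne c}).measurableSet
  rw [cond_apply h_meas, firstOne_eq_setOf_prefixOf, ← Set.ofPred_and,
    measure_setOf_prefixOf hμ, measure_setOf_prefixOf hμ (fun c => FirstNonzeroIsOne c ∧ P c),
    firstOneCube, filter_filter, mul_comm, ← div_eq_mul_inv,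
    ENNReal.mul_div_mul_right _ _ (by simp) (by simp)]

end Measure

end SignedBinary

open SignedBinary

/-- with `N(ω)` the number of `a ∈ {1,…,n−1}` with `b̃_{a-1} = 0` and `b̃_a = 0`, for every `ε > 0` the conditional probability `μ((4/18 − ε)n < N < (4/18 + ε)n ∣ F_n) → 1` as `n → ∞`. -/
theorem stmt_10 (μ : Measure (ℕ → ℤ)) (hμ : IsCDGProductMeasure μ) (ε : ℝ) (hε : 0 < ε) :
    Tendsto (fun n : ℕ =>
      μ[|firstOne n] {ω : ℕ → ℤ |
        (4 / 18 - ε) * n <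
          (((Finset.Ico 1 n).filter (fun a =>
            btilde n ω (a - 1) = 0 ∧ btilde n ω a = 0)).card : ℝ) ∧
        (((Finset.Ico 1 n).filter (fun a =>
            btilde n ω (a - 1) = 0 ∧ btilde n ω a = 0)).card : ℝ) <
          (4 / 18 + ε) * n})
      atTop (nhds 1) := by
  simp only [btilde, cdgS_eq_signedValue]
  refine (tendsto_card_filter_div_card firstOneCube
    (fun n c => IsTypical ε n (numZeroPairs n (signedValue c).toNat))
    (tendsto_const_div_atTop_nhds_zero_nat (290 / (27 * ε ^ 2))) ?_).congr fun n => ?_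
  · filter_upwards [eventually_ge_atTop 1] with n hn
    exact ⟨card_pos.1 (one_le_card_firstOneCube hn), card_not_isTypical_le hε hn⟩
  · exact (cond_firstOne_setOf_prefixOf hμ
      fun c => IsTypical ε n (numZeroPairs n (signedValue c).toNat)).symm
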